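/- arXiv:1710.02164 — 2 statements merged into one kernel-verified Lean document; each statement's English description precedes it below -/
import Mathlib

section
/- Suppose the Walker metric functions A, B, C satisfy (E1) A_{,vv} = B_{,VV}, (E2) 2B_{,vV} + C_{,vv} = 0, (E3) 2A_{,vV} + C_{,VV} = 0 and (E7) A_{,vv} + B_{,VV} + C_{,vV} = 2λ for a real constant λ, and suppose the self-dual Weyl components Ψ₀, Ψ₁, Ψ₂, Ψ₃, Ψ₄ are constant functions, equal to real numbers ψ₀, ψ₁, ψ₂, ψ₃, ψ₄ respectively. Then there exist smooth functions A₁₀, A₀₁, A₀₀, B₁₀, B₀₁, B₀₀, C₁₀, C₀₁, C₀₀ of (u, U) alone such that A = (1/2)ψ₄ V² + ψ₃ v V + (λ/3 + ψ₂/2) v² + A₁₀ v + A₀₁ V + A₀₀, B = (1/2)ψ₀ v² + ψ₁ v V + (λ/3 + ψ₂/2) V² + B₁₀ v + B₀₁ V + B₀₀, and C = −ψ₃ V² − ψ₁ v² + 2(λ/3 − ψ₂) v V + C₁₀ v + C₀₁ V + C₀₀. -/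
noncomputable section

/-- Real-valued functions on ℝ⁴, with coordinates `x 0 = u`, `x 1 = v`, `x 2 = U`, `x 3 = V`. -/
abbrev Fn : Type := (Fin 4 → ℝ) → ℝ

/-- Partial derivative in the `i`-th coordinate direction. -/
def pd (i : Fin 4) (f : Fn) : Fn :=
  fun x => lineDeriv ℝ f x (Pi.single i 1)

/-- ∂/∂u -/ def pu : Fn → Fn := pd 0
/-- ∂/∂v -/ def pv : Fn → Fn := pd 1
/-- ∂/∂U -/ def pU : Fn → Fn := pd 2
/-- ∂/∂V -/ def pV : Fn → Fn := pd 3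

/-- Ψ₀ = B_{,vv} -/
def Psi0 (B : Fn) : Fn := fun x => pv (pv B) x
/-- Ψ₁ = (1/2) B_{,vV} − (1/4) C_{,vv} -/
def Psi1 (B C : Fn) : Fn := fun x => (1/2) * pV (pv B) x - (1/4) * pv (pv C) x
/-- Ψ₂ = (A_{,vv} + B_{,VV} − 2 C_{,vV})/6 -/
def Psi2 (A B C : Fn) : Fn := fun x => (pv (pv A) x + pV (pV B) x - 2 * pV (pv C) x) / 6
/-- Ψ₃ = (1/2) A_{,vV} − (1/4) C_{,VV} -/
def Psi3 (A C : Fn) : Fn := fun x => (1/2) * pV (pv A) x - (1/4) * pV (pV C) x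
/-- Ψ₄ = A_{,VV} -/
def Psi4 (A : Fn) : Fn := fun x => pV (pV A) x

/-- Einstein condition (E1): A_{,vv} = B_{,VV}. -/
def E1 (A B : Fn) : Prop := ∀ x, pv (pv A) x = pV (pV B) x
/-- Einstein condition (E2): 2 B_{,vV} + C_{,vv} = 0. -/
def E2 (B C : Fn) : Prop := ∀ x, 2 * pV (pv B) x + pv (pv C) x = 0
/-- Einstein condition (E3): 2 A_{,vV} + C_{,VV} = 0. -/
def E3 (A C : Fn) : Prop := ∀ x, 2 * pV (pv A) x + pV (pV C) x = 0

/-- Einstein condition (E7): A_{,vv} + B_{,VV} + C_{,vV} = 2λ. -/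
def E7 (A B C : Fn) (lam : ℝ) : Prop :=
  ∀ x, pv (pv A) x + pV (pV B) x + pV (pv C) x = 2 * lam

namespace Aux0

lemma pd_eq {f : Fn} (hf : ContDiff ℝ (⊤ : ℕ∞) f) (i : Fin 4) (x : Fin 4 → ℝ) :
    pd i f x = fderiv ℝ f x (Pi.single i 1) :=
  (hf.differentiable (by simp) x).lineDeriv_eq_fderiv

lemma pd_contDiff {f : Fn} (hf : ContDiff ℝ (⊤ : ℕ∞) f) (i : Fin 4) : ContDiff ℝ (⊤ : ℕ∞) (pd i f) := by
  have h : pd i f = fun x =>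
      (ContinuousLinearMap.apply ℝ ℝ ((Pi.single i 1 : Fin 4 → ℝ))) (fderiv ℝ f x) := by
    funext x; exact pd_eq hf i x
  rw [h]
  exact (ContinuousLinearMap.apply ℝ ℝ _).contDiff.comp (hf.fderiv_right (m := (⊤ : ℕ∞)) (by simp))

lemma pd_comm {f : Fn} (hf : ContDiff ℝ (⊤ : ℕ∞) f) (i j : Fin 4) (x : Fin 4 → ℝ) :
    pd i (pd j f) x = pd j (pd i f) x := by
  have hsym : IsSymmSndFDerivAt ℝ f x := by
    apply hf.contDiffAt.isSymmSndFDerivAt (n := (⊤ : ℕ∞))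
    exact (by simp; exact WithTop.coe_le_coe.mpr (le_top : (2 : ℕ∞) ≤ ⊤))
  have key : ∀ k l : Fin 4, pd k (pd l f) x
      = fderiv ℝ (fderiv ℝ f) x (Pi.single k 1) (Pi.single l 1) := by
    intro k l
    rw [pd_eq (pd_contDiff hf l) k x]
    have h : pd l f = fun y =>
        (ContinuousLinearMap.apply ℝ ℝ ((Pi.single l 1 : Fin 4 → ℝ))) (fderiv ℝ f y) := by
      funext y; exact pd_eq hf l y
    rw [h, fderiv_comp' x (ContinuousLinearMap.differentiableAt _)
      ((hf.fderiv_right (m := (⊤ : ℕ∞)) ((by simp))).differentiable (by simp) x)]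
    simp [ContinuousLinearMap.fderiv]
  rw [key i j, key j i, hsym.eq]

lemma line_eq {f : Fn} (hf : ContDiff ℝ (⊤ : ℕ∞) f) (i : Fin 4) (x : Fin 4 → ℝ)
    (a b : ℝ) (h : ∀ t : ℝ, pd i f (x + t • (Pi.single i 1 : Fin 4 → ℝ)) = a + t * b) (t : ℝ) :
    f (x + t • (Pi.single i 1 : Fin 4 → ℝ)) = f x + t * a + t ^ 2 / 2 * b := by
  set e : Fin 4 → ℝ := Pi.single i 1 with he
  have hline : ∀ s : ℝ, HasDerivAt (fun t : ℝ => f (x + t • e)) (a + s * b) s := by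
    intro s
    have h1 : HasDerivAt (fun t : ℝ => x + t • e) e s := by
      simpa using ((hasDerivAt_id s).smul_const e).const_add x
    have h2 : HasFDerivAt f (fderiv ℝ f (x + s • e)) (x + s • e) :=
      (hf.differentiable (by simp) _).hasFDerivAt
    have := h2.comp_hasDerivAt s h1
    have hval : fderiv ℝ f (x + s • e) e = a + s * b := by
      rw [← pd_eq hf i (x + s • e)]; exact h s
    rw [hval] at this; exact this
  have hconst : ∀ s : ℝ, (fun t : ℝ => f (x + t • e) - (t * a + t ^ 2 / 2 * b)) s
      = (fun t : ℝ => f (x + t • e) - (t * a + t ^ 2 / 2 * b)) 0 := by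
    intro s
    apply is_const_of_deriv_eq_zero
      (f := fun t : ℝ => f (x + t • e) - (t * a + t ^ 2 / 2 * b))
    · intro u
      exact ((hline u).sub (((hasDerivAt_id u).mul_const a).add
        (by simpa using (((hasDerivAt_pow 2 u).div_const 2).mul_const b)))).differentiableAt
    · intro u
      have h5 : HasDerivAt (fun t : ℝ => f (x + t • e) - (t * a + t ^ 2 / 2 * b))
          ((a + u * b) - (1 * a + (2:ℕ) * u ^ (2-1) / 2 * b)) u :=
        (hline u).sub (((hasDerivAt_id u).mul_const a).add
          (((hasDerivAt_pow 2 u).div_const 2).mul_const b))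
      rw [h5.deriv]; push_cast; ring
  have := hconst t
  simp only at this
  have h0 : f (x + (0:ℝ) • e) = f x := by simp
  rw [h0] at this
  linarith [this]

end Aux0

namespace Aux0

lemma bs_smooth : ContDiff ℝ (⊤ : ℕ∞) (fun p : ℝ × ℝ => (![p.1, 0, p.2, 0] : Fin 4 → ℝ)) := by
  apply contDiff_pi.mpr
  intro i
  fin_cases i
  · simpa using contDiff_fst
  · simpa using contDiff_const (c := (0:ℝ))
  · simpa using contDiff_snd
  · simpa using contDiff_const (c := (0:ℝ))

lemma decompose {f : Fn} (hf : ContDiff ℝ (⊤ : ℕ∞) f) (c11 c13 c33 : ℝ)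
    (h11 : ∀ x, pd 1 (pd 1 f) x = c11)
    (h31 : ∀ x, pd 3 (pd 1 f) x = c13)
    (h33 : ∀ x, pd 3 (pd 3 f) x = c33) :
    ∃ f10 f01 f00 : ℝ → ℝ → ℝ,
      ContDiff ℝ (⊤ : ℕ∞) (fun p : ℝ × ℝ => f10 p.1 p.2) ∧
      ContDiff ℝ (⊤ : ℕ∞) (fun p : ℝ × ℝ => f01 p.1 p.2) ∧
      ContDiff ℝ (⊤ : ℕ∞) (fun p : ℝ × ℝ => f00 p.1 p.2) ∧
      ∀ x, f x = c11/2 * (x 1)^2 + c13 * (x 1) * (x 3) + c33/2 * (x 3)^2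
           + f10 (x 0) (x 2) * (x 1) + f01 (x 0) (x 2) * (x 3)
           + f00 (x 0) (x 2) := by
  refine ⟨fun u U => pd 1 f ![u, 0, U, 0], fun u U => pd 3 f ![u, 0, U, 0],
    fun u U => f ![u, 0, U, 0], ?_, ?_, ?_, ?_⟩
  · exact (pd_contDiff hf 1).comp bs_smooth
  · exact (pd_contDiff hf 3).comp bs_smooth
  · exact hf.comp bs_smooth
  intro x
  set b : Fin 4 → ℝ := ![x 0, 0, x 2, 0] with hb
  have hx : x = b + (x 1) • (Pi.single 1 1 : Fin 4 → ℝ) + (x 3) • (Pi.single 3 1 : Fin 4 → ℝ) := by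
    funext j
    fin_cases j <;>
      (simp [hb, Pi.single_apply, Matrix.vecHead, Matrix.vecTail] <;> (intro h; exact absurd h (by decide)))
  -- step iii : pd 3 f (b + t • e1) = pd 3 f b + t * c13
  have hiii : ∀ t : ℝ, pd 3 f (b + t • (Pi.single 1 1 : Fin 4 → ℝ)) = pd 3 f b + t * c13 := by
    intro t
    have h := line_eq (pd_contDiff hf 3) 1 b c13 0
      (fun s => by rw [pd_comm hf 1 3, h31]; ring) t
    rw [h]; try ring
  -- step i : pd 1 f (b + t • e1) = pd 1 f b + t * c11
  have hi : ∀ t : ℝ, pd 1 f (b + t • (Pi.single 1 1 : Fin 4 → ℝ)) = pd 1 f b + t * c11 := by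
    intro t
    have h := line_eq (pd_contDiff hf 1) 1 b c11 0
      (fun s => by rw [h11]; ring) t
    rw [h]; try ring
  -- step ii : f (b + t • e1) = f b + t * pd 1 f b + t^2/2 * c11
  have hii : ∀ t : ℝ, f (b + t • (Pi.single 1 1 : Fin 4 → ℝ))
      = f b + t * pd 1 f b + t ^ 2 / 2 * c11 :=
    fun t => line_eq hf 1 b (pd 1 f b) c11 (fun s => by rw [hi s]) t
  -- step iv
  have hiv : ∀ t : ℝ, pd 3 f ((b + (x 1) • (Pi.single 1 1 : Fin 4 → ℝ))
        + t • (Pi.single 3 1 : Fin 4 → ℝ))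
      = pd 3 f (b + (x 1) • (Pi.single 1 1 : Fin 4 → ℝ)) + t * c33 := by
    intro t
    have h := line_eq (pd_contDiff hf 3) 3 (b + (x 1) • (Pi.single 1 1 : Fin 4 → ℝ)) c33 0
      (fun s => by rw [h33]; ring) t
    rw [h]; try ring
  -- step v : f along e3
  have hv : f ((b + (x 1) • (Pi.single 1 1 : Fin 4 → ℝ)) + (x 3) • (Pi.single 3 1 : Fin 4 → ℝ))
      = f (b + (x 1) • (Pi.single 1 1 : Fin 4 → ℝ))
        + (x 3) * pd 3 f (b + (x 1) • (Pi.single 1 1 : Fin 4 → ℝ)) + (x 3) ^ 2 / 2 * c33 :=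
    line_eq hf 3 _ (pd 3 f (b + (x 1) • (Pi.single 1 1 : Fin 4 → ℝ))) c33
      (fun s => by rw [hiv s]) (x 3)
  have hfx : f x = f ((b + (x 1) • (Pi.single 1 1 : Fin 4 → ℝ))
      + (x 3) • (Pi.single 3 1 : Fin 4 → ℝ)) := congrArg f hx
  rw [hfx, hv, hii (x 1), hiii (x 1)]
  show _ = _ + pd 1 f ![x 0, 0, x 2, 0] * (x 1) + pd 3 f ![x 0, 0, x 2, 0] * (x 3) + f ![x 0, 0, x 2, 0]
  rw [hb]
  ring

end Aux0

/-- Einstein Walker metrics (E1)–(E3), (E7) with constant self-dual Weyl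
components Ψ₀,…,Ψ₄ have metric functions quadratic in (v, V) of the stated form. -/
theorem stmt0 (A B C : Fn) (lam : ℝ)
    (hA : ContDiff ℝ (⊤ : ℕ∞) A) (hB : ContDiff ℝ (⊤ : ℕ∞) B) (hC : ContDiff ℝ (⊤ : ℕ∞) C)
    (ψ0 ψ1 ψ2 ψ3 ψ4 : ℝ)
    (hE1 : E1 A B) (hE2 : E2 B C) (hE3 : E3 A C) (hE7 : E7 A B C lam)
    (hΨ0 : ∀ x, Psi0 B x = ψ0)
    (hΨ1 : ∀ x, Psi1 B C x = ψ1)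
    (hΨ2 : ∀ x, Psi2 A B C x = ψ2)
    (hΨ3 : ∀ x, Psi3 A C x = ψ3)
    (hΨ4 : ∀ x, Psi4 A x = ψ4) :
    ∃ A10 A01 A00 B10 B01 B00 C10 C01 C00 : ℝ → ℝ → ℝ,
      ContDiff ℝ (⊤ : ℕ∞) (fun p : ℝ × ℝ => A10 p.1 p.2) ∧
      ContDiff ℝ (⊤ : ℕ∞) (fun p : ℝ × ℝ => A01 p.1 p.2) ∧
      ContDiff ℝ (⊤ : ℕ∞) (fun p : ℝ × ℝ => A00 p.1 p.2) ∧
      ContDiff ℝ (⊤ : ℕ∞) (fun p : ℝ × ℝ => B10 p.1 p.2) ∧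
      ContDiff ℝ (⊤ : ℕ∞) (fun p : ℝ × ℝ => B01 p.1 p.2) ∧
      ContDiff ℝ (⊤ : ℕ∞) (fun p : ℝ × ℝ => B00 p.1 p.2) ∧
      ContDiff ℝ (⊤ : ℕ∞) (fun p : ℝ × ℝ => C10 p.1 p.2) ∧
      ContDiff ℝ (⊤ : ℕ∞) (fun p : ℝ × ℝ => C01 p.1 p.2) ∧
      ContDiff ℝ (⊤ : ℕ∞) (fun p : ℝ × ℝ => C00 p.1 p.2) ∧
      (∀ x, A x = (1/2) * ψ4 * (x 3)^2 + ψ3 * (x 1) * (x 3)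
          + (lam/3 + ψ2/2) * (x 1)^2
          + A10 (x 0) (x 2) * x 1 + A01 (x 0) (x 2) * x 3 + A00 (x 0) (x 2)) ∧
      (∀ x, B x = (1/2) * ψ0 * (x 1)^2 + ψ1 * (x 1) * (x 3)
          + (lam/3 + ψ2/2) * (x 3)^2
          + B10 (x 0) (x 2) * x 1 + B01 (x 0) (x 2) * x 3 + B00 (x 0) (x 2)) ∧
      (∀ x, C x = -ψ3 * (x 3)^2 - ψ1 * (x 1)^2 + 2 * (lam/3 - ψ2) * (x 1) * (x 3)
          + C10 (x 0) (x 2) * x 1 + C01 (x 0) (x 2) * x 3 + C00 (x 0) (x 2)) := by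
  simp only [Psi0, Psi1, Psi2, Psi3, Psi4, pv, pV] at hΨ0 hΨ1 hΨ2 hΨ3 hΨ4
  simp only [E1, E2, E3, E7, pv, pV] at hE1 hE2 hE3 hE7
  obtain ⟨A10, A01, A00, hA1, hA2, hA3, hAeq⟩ := Aux0.decompose hA (2*lam/3 + ψ2) ψ3 ψ4
    (fun x => by have h1 := hE1 x; have h7 := hE7 x; have h2 := hΨ2 x; linarith)
    (fun x => by have h3 := hE3 x; have h := hΨ3 x; linarith)
    (fun x => hΨ4 x)
  obtain ⟨B10, B01, B00, hB1, hB2, hB3, hBeq⟩ := Aux0.decompose hB ψ0 ψ1 (2*lam/3 + ψ2)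
    (fun x => hΨ0 x)
    (fun x => by have h2 := hE2 x; have h := hΨ1 x; linarith)
    (fun x => by have h1 := hE1 x; have h7 := hE7 x; have h2 := hΨ2 x; linarith)
  obtain ⟨C10, C01, C00, hC1, hC2, hC3, hCeq⟩ := Aux0.decompose hC (-2*ψ1) (2*lam/3 - 2*ψ2) (-2*ψ3)
    (fun x => by have h2 := hE2 x; have h := hΨ1 x; linarith)
    (fun x => by have h1 := hE1 x; have h7 := hE7 x; have h2 := hΨ2 x; linarith)
    (fun x => by have h3 := hE3 x; have h := hΨ3 x; linarith)
  refine ⟨A10, A01, A00, B10, B01, B00, C10, C01, C00,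
    hA1, hA2, hA3, hB1, hB2, hB3, hC1, hC2, hC3, ?_, ?_, ?_⟩
  · intro x; rw [hAeq x]; ring
  · intro x; rw [hBeq x]; ring
  · intro x; rw [hCeq x]; ring
end
end

section
/- Suppose the Walker metric functions A, B, C satisfy (E1) A_{,vv} = B_{,VV}, (E2) 2B_{,vV} + C_{,vv} = 0, (E3) 2A_{,vV} + C_{,VV} = 0 and (E7) A_{,vv} + B_{,VV} + C_{,vV} = 2λ for a real constant λ, and that the self-dual Weyl components vanish identically: Ψ₀ = Ψ₁ = Ψ₂ = Ψ₃ = Ψ₄ = 0. Then there exist smooth functions A₁₀, A₀₁, A₀₀, B₁₀, B₀₁, B₀₀, C₁₀, C₀₁, C₀₀ of (u, U) alone such that A = (λ/3) v² + A₁₀ v + A₀₁ V + A₀₀, B = (λ/3) V² + B₁₀ v + B₀₁ V + B₀₀, and C = (2λ/3) v V + C₁₀ v + C₀₁ V + C₀₀. -/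
noncomputable section

section
namespace WalkerAux

abbrev ee (i : Fin 4) : Fin 4 → ℝ := Pi.single i 1

lemma pd_eq (f : Fn) (hf : ContDiff ℝ (⊤ : ℕ∞) f) (i : Fin 4) (x : Fin 4 → ℝ) :
    pd i f x = fderiv ℝ f x (ee i) :=
  (hf.differentiable (by simp) x).lineDeriv_eq_fderiv

lemma contDiff_fderiv_apply (f : Fn) (hf : ContDiff ℝ (⊤ : ℕ∞) f) (w : Fin 4 → ℝ) :
    ContDiff ℝ (⊤ : ℕ∞) fun x => fderiv ℝ f x w :=
  (hf.fderiv_right (by simp)).clm_apply contDiff_const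

lemma pd_pd (f : Fn) (hf : ContDiff ℝ (⊤ : ℕ∞) f) (i j : Fin 4) (x : Fin 4 → ℝ) :
    pd j (pd i f) x = fderiv ℝ (fderiv ℝ f) x (ee j) (ee i) := by
  have h1 : pd i f = fun y => fderiv ℝ f y (ee i) := funext fun y => pd_eq f hf i y
  have hd : DifferentiableAt ℝ (fun y => fderiv ℝ f y (ee i)) x :=
    ((contDiff_fderiv_apply f hf (ee i)).differentiable (by simp)).differentiableAt
  rw [show pd j (pd i f) x = lineDeriv ℝ (pd i f) x (ee j) from rfl, h1,
    hd.lineDeriv_eq_fderiv,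
    fderiv_clm_apply (((hf.fderiv_right (m := (⊤ : ℕ∞)) (by simp)).differentiable (by simp)).differentiableAt)
      (differentiableAt_const _)]
  simp

lemma line_quad (f : Fn) (hf : ContDiff ℝ (⊤ : ℕ∞) f) (p w : Fin 4 → ℝ) (K : ℝ)
    (hHess : ∀ y, fderiv ℝ (fderiv ℝ f) y w w = K) :
    f (p + w) = f p + fderiv ℝ f p w + K / 2 := by
  have hdiff : Differentiable ℝ f := hf.differentiable (by simp)
  have hF : Differentiable ℝ (fderiv ℝ f) := (hf.fderiv_right (m := (⊤ : ℕ∞)) (by simp)).differentiable (by simp)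
  set φ : ℝ → (Fin 4 → ℝ) := fun t => p + t • w with hφ
  have hφd : ∀ t, HasDerivAt φ w t := by
    intro t
    have h := ((hasDerivAt_id t).smul_const w).const_add p
    simp only [one_smul] at h
    exact h
  have hg1 : ∀ t, HasDerivAt (fun t => fderiv ℝ f (φ t) w) K t := by
    intro t
    have h1 : HasFDerivAt (fun y => fderiv ℝ f y w)
        ((fderiv ℝ f (φ t)).comp 0 + (fderiv ℝ (fderiv ℝ f) (φ t)).flip w) (φ t) :=
      (hF.differentiableAt.hasFDerivAt).clm_apply (hasFDerivAt_const w (φ t))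
    have h2 := h1.comp_hasDerivAt t (hφd t)
    simp [hHess (φ t)] at h2
    exact h2
  have hA0 : ∀ t : ℝ, HasDerivAt (fun t => fderiv ℝ f (φ t) w - K * t) 0 t := by
    intro t
    have := (hg1 t).sub ((hasDerivAt_id t).const_mul K)
    simp at this
    exact this
  have hg1eq : ∀ t, fderiv ℝ f (φ t) w = fderiv ℝ f p w + K * t := by
    intro t
    have h := is_const_of_deriv_eq_zero (fun s => (hA0 s).differentiableAt)
      (fun s => (hA0 s).deriv) t 0
    have hφ0 : φ 0 = p := by simp [hφ]
    simp only [hφ0, mul_zero, sub_zero] at h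
    linarith
  have hgd : ∀ t : ℝ, HasDerivAt
      (fun t => f (φ t) - (fderiv ℝ f p w * t + K * t ^ 2 / 2)) 0 t := by
    intro t
    have h1 : HasDerivAt (fun t => f (φ t)) (fderiv ℝ f (φ t) w) t :=
      (hdiff (φ t)).hasFDerivAt.comp_hasDerivAt t (hφd t)
    have h2 : HasDerivAt (fun t : ℝ => fderiv ℝ f p w * t + K * t ^ 2 / 2)
        (fderiv ℝ f p w + K * t) t := by
      have h3 : HasDerivAt (fun t : ℝ => fderiv ℝ f p w * t + K * t ^ 2 / 2)
          (fderiv ℝ f p w * 1 + K * (((2:ℕ):ℝ) * t ^ (2 - 1)) / 2) t :=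
        (((hasDerivAt_id t).const_mul (fderiv ℝ f p w))).add
        (((hasDerivAt_pow 2 t).const_mul K).div_const 2)
      convert h3 using 1
      push_cast
      ring
    have h4 := h1.sub h2
    rw [hg1eq t] at h4
    simp at h4
    exact h4
  have hfin := is_const_of_deriv_eq_zero (fun s => (hgd s).differentiableAt)
    (fun s => (hgd s).deriv) 1 0
  have hφ1 : φ 1 = p + w := by simp [hφ]
  have hφ0 : φ 0 = p := by simp [hφ]
  simp only [hφ1, hφ0, mul_one, one_pow, mul_zero, zero_pow, sub_zero] at hfin
  linarith [hfin]



def bpt (u U : ℝ) : Fin 4 → ℝ := ![u, 0, U, 0]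

lemma bpt_add (x : Fin 4 → ℝ) :
    bpt (x 0) (x 2) + (x 1 • ee 1 + x 3 • ee 3) = x := by
  funext i
  fin_cases i <;> simp [bpt, ee, Pi.single_apply]

lemma contDiff_bpt : ContDiff ℝ (⊤ : ℕ∞) (fun p : ℝ × ℝ => bpt p.1 p.2) := by
  rw [contDiff_pi]
  intro i
  fin_cases i <;> simp [bpt] <;> fun_prop

lemma quad_rep (f : Fn) (hf : ContDiff ℝ (⊤ : ℕ∞) f) (c11 c13 c33 : ℝ)
    (h11 : ∀ x, pd 1 (pd 1 f) x = c11)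
    (h31 : ∀ x, pd 3 (pd 1 f) x = c13)
    (h33 : ∀ x, pd 3 (pd 3 f) x = c33) (x : Fin 4 → ℝ) :
    f x = f (bpt (x 0) (x 2)) + pd 1 f (bpt (x 0) (x 2)) * x 1
        + pd 3 f (bpt (x 0) (x 2)) * x 3
        + (c11 * (x 1) ^ 2 + 2 * c13 * (x 1) * (x 3) + c33 * (x 3) ^ 2) / 2 := by
  have hHess : ∀ y, fderiv ℝ (fderiv ℝ f) y (x 1 • ee 1 + x 3 • ee 3) (x 1 • ee 1 + x 3 • ee 3)
      = c11 * (x 1) ^ 2 + 2 * c13 * (x 1) * (x 3) + c33 * (x 3) ^ 2 := by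
    intro y
    have hsym : ∀ v w, fderiv ℝ (fderiv ℝ f) y v w = fderiv ℝ (fderiv ℝ f) y w v :=
      (hf.contDiffAt (x := y)).isSymmSndFDerivAt (by rw [minSmoothness_of_isRCLikeNormedField]; exact WithTop.coe_le_coe.mpr (le_top : (2 : ℕ∞) ≤ ⊤))
    have expand : fderiv ℝ (fderiv ℝ f) y (x 1 • ee 1 + x 3 • ee 3) (x 1 • ee 1 + x 3 • ee 3)
        = x 1 * x 1 * (fderiv ℝ (fderiv ℝ f) y (ee 1) (ee 1))
        + x 1 * x 3 * (fderiv ℝ (fderiv ℝ f) y (ee 1) (ee 3))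
        + x 3 * x 1 * (fderiv ℝ (fderiv ℝ f) y (ee 3) (ee 1))
        + x 3 * x 3 * (fderiv ℝ (fderiv ℝ f) y (ee 3) (ee 3)) := by
      simp only [map_add, map_smul, ContinuousLinearMap.add_apply,
        ContinuousLinearMap.smul_apply, smul_eq_mul]
      ring
    rw [expand, hsym (ee 1) (ee 3), ← pd_pd f hf 1 1 y, ← pd_pd f hf 1 3 y,
      ← pd_pd f hf 3 3 y, h11 y, h31 y, h33 y]
    ring
  have hmain := line_quad f hf (bpt (x 0) (x 2)) (x 1 • ee 1 + x 3 • ee 3) _ hHess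
  rw [bpt_add x] at hmain
  have hPw : fderiv ℝ f (bpt (x 0) (x 2)) (x 1 • ee 1 + x 3 • ee 3)
      = x 1 * pd 1 f (bpt (x 0) (x 2)) + x 3 * pd 3 f (bpt (x 0) (x 2)) := by
    rw [pd_eq f hf 1 _, pd_eq f hf 3 _]
    simp only [map_add, map_smul, smul_eq_mul]
  rw [hPw] at hmain
  linarith [hmain]

lemma contDiff_coeff (f : Fn) (hf : ContDiff ℝ (⊤ : ℕ∞) f) (i : Fin 4) :
    ContDiff ℝ (⊤ : ℕ∞) (fun p : ℝ × ℝ => pd i f (bpt p.1 p.2)) := by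
  have h1 : (fun p : ℝ × ℝ => pd i f (bpt p.1 p.2))
      = (fun x => fderiv ℝ f x (ee i)) ∘ (fun p : ℝ × ℝ => bpt p.1 p.2) := by
    funext p
    simp [Function.comp, pd_eq f hf i]
  rw [h1]
  exact (contDiff_fderiv_apply f hf (ee i)).comp contDiff_bpt

lemma contDiff_val (f : Fn) (hf : ContDiff ℝ (⊤ : ℕ∞) f) :
    ContDiff ℝ (⊤ : ℕ∞) (fun p : ℝ × ℝ => f (bpt p.1 p.2)) :=
  hf.comp contDiff_bpt

end WalkerAux
end

/-- Einstein Walker metrics (E1)–(E3), (E7) with vanishing self-dual Weyl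
tensor have metric functions of the universal form. -/
theorem stmt1 (A B C : Fn) (lam : ℝ)
    (hA : ContDiff ℝ (⊤ : ℕ∞) A) (hB : ContDiff ℝ (⊤ : ℕ∞) B) (hC : ContDiff ℝ (⊤ : ℕ∞) C)
    (hE1 : E1 A B) (hE2 : E2 B C) (hE3 : E3 A C) (hE7 : E7 A B C lam)
    (hΨ0 : ∀ x, Psi0 B x = 0)
    (hΨ1 : ∀ x, Psi1 B C x = 0)
    (hΨ2 : ∀ x, Psi2 A B C x = 0)
    (hΨ3 : ∀ x, Psi3 A C x = 0)
    (hΨ4 : ∀ x, Psi4 A x = 0) :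
    ∃ A10 A01 A00 B10 B01 B00 C10 C01 C00 : ℝ → ℝ → ℝ,
      ContDiff ℝ (⊤ : ℕ∞) (fun p : ℝ × ℝ => A10 p.1 p.2) ∧
      ContDiff ℝ (⊤ : ℕ∞) (fun p : ℝ × ℝ => A01 p.1 p.2) ∧
      ContDiff ℝ (⊤ : ℕ∞) (fun p : ℝ × ℝ => A00 p.1 p.2) ∧
      ContDiff ℝ (⊤ : ℕ∞) (fun p : ℝ × ℝ => B10 p.1 p.2) ∧
      ContDiff ℝ (⊤ : ℕ∞) (fun p : ℝ × ℝ => B01 p.1 p.2) ∧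
      ContDiff ℝ (⊤ : ℕ∞) (fun p : ℝ × ℝ => B00 p.1 p.2) ∧
      ContDiff ℝ (⊤ : ℕ∞) (fun p : ℝ × ℝ => C10 p.1 p.2) ∧
      ContDiff ℝ (⊤ : ℕ∞) (fun p : ℝ × ℝ => C01 p.1 p.2) ∧
      ContDiff ℝ (⊤ : ℕ∞) (fun p : ℝ × ℝ => C00 p.1 p.2) ∧
      (∀ x, A x = (lam/3) * (x 1)^2
          + A10 (x 0) (x 2) * x 1 + A01 (x 0) (x 2) * x 3 + A00 (x 0) (x 2)) ∧
      (∀ x, B x = (lam/3) * (x 3)^2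
          + B10 (x 0) (x 2) * x 1 + B01 (x 0) (x 2) * x 3 + B00 (x 0) (x 2)) ∧
      (∀ x, C x = (2*lam/3) * (x 1) * (x 3)
          + C10 (x 0) (x 2) * x 1 + C01 (x 0) (x 2) * x 3 + C00 (x 0) (x 2)) := by
  
  simp only [E1, E2, E3, E7, Psi0, Psi1, Psi2, Psi3, Psi4, pv, pV] at hE1 hE2 hE3 hE7 hΨ0 hΨ1 hΨ2 hΨ3 hΨ4
  have hA11 : ∀ x, pd 1 (pd 1 A) x = 2 * lam / 3 := fun x => by
    linarith [hE1 x, hE7 x, hΨ2 x]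
  have hA31 : ∀ x, pd 3 (pd 1 A) x = 0 := fun x => by linarith [hΨ3 x, hE3 x]
  have hA33 : ∀ x, pd 3 (pd 3 A) x = 0 := fun x => hΨ4 x
  have hB11 : ∀ x, pd 1 (pd 1 B) x = 0 := fun x => hΨ0 x
  have hB31 : ∀ x, pd 3 (pd 1 B) x = 0 := fun x => by linarith [hΨ1 x, hE2 x]
  have hB33 : ∀ x, pd 3 (pd 3 B) x = 2 * lam / 3 := fun x => by
    linarith [hE1 x, hE7 x, hΨ2 x]
  have hC11 : ∀ x, pd 1 (pd 1 C) x = 0 := fun x => by linarith [hΨ1 x, hE2 x]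
  have hC31 : ∀ x, pd 3 (pd 1 C) x = 2 * lam / 3 := fun x => by
    linarith [hE1 x, hE7 x, hΨ2 x]
  have hC33 : ∀ x, pd 3 (pd 3 C) x = 0 := fun x => by linarith [hΨ3 x, hE3 x]
  refine ⟨fun u U => pd 1 A (WalkerAux.bpt u U), fun u U => pd 3 A (WalkerAux.bpt u U),
    fun u U => A (WalkerAux.bpt u U),
    fun u U => pd 1 B (WalkerAux.bpt u U), fun u U => pd 3 B (WalkerAux.bpt u U),
    fun u U => B (WalkerAux.bpt u U),
    fun u U => pd 1 C (WalkerAux.bpt u U), fun u U => pd 3 C (WalkerAux.bpt u U),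
    fun u U => C (WalkerAux.bpt u U),
    WalkerAux.contDiff_coeff A hA 1, WalkerAux.contDiff_coeff A hA 3,
    WalkerAux.contDiff_val A hA,
    WalkerAux.contDiff_coeff B hB 1, WalkerAux.contDiff_coeff B hB 3,
    WalkerAux.contDiff_val B hB,
    WalkerAux.contDiff_coeff C hC 1, WalkerAux.contDiff_coeff C hC 3,
    WalkerAux.contDiff_val C hC, ?_, ?_, ?_⟩
  · intro x
    rw [WalkerAux.quad_rep A hA _ _ _ hA11 hA31 hA33 x]
    ring
  · intro x
    rw [WalkerAux.quad_rep B hB _ _ _ hB11 hB31 hB33 x]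
    ring
  · intro x
    rw [WalkerAux.quad_rep C hC _ _ _ hC11 hC31 hC33 x]
    ring
end
end
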